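/- If R_o is a reflexive relation on X_o, then its unique logical extension R_A to all simple types A (built over o with → and ×) is reflexive at every type A, when restricted to elements definable by lambda terms; more precisely, every definable element of X_A is R_A-related to itself. -/
import Mathlib


/-- Simple types over a base type `o`, with function and product types. -/
inductive Sty
  | o
  | arr (A B : Sty)
  | prod (A B : Sty)

/-- Typed de Bruijn style membership of a type in a context. -/
inductive Mem' : Sty → List Sty → Type
  | here {A : Sty} {Γ : List Sty} : Mem' A (A :: Γ)
  | there {A B : Sty} {Γ : List Sty} : Mem' A Γ → Mem' A (B :: Γ)

/-- Intrinsically well-typed terms of the simply typed lambda calculus. -/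
inductive Term : List Sty → Sty → Type
  | var {Γ A} : Mem' A Γ → Term Γ A
  | lam {Γ A B} : Term (A :: Γ) B → Term Γ (.arr A B)
  | app {Γ A B} : Term Γ (.arr A B) → Term Γ A → Term Γ B
  | pair {Γ A B} : Term Γ A → Term Γ B → Term Γ (.prod A B)
  | p1 {Γ A B} : Term Γ (.prod A B) → Term Γ A
  | p2 {Γ A B} : Term Γ (.prod A B) → Term Γ B

/-- Environments assigning domain elements to the variables of a context. -/
def Env (X : Sty → Type) : List Sty → Type
  | [] => PUnit
  | A :: Γ => X A × Env X Γ

def lookupEnv {X : Sty → Type} : ∀ {A : Sty} {Γ : List Sty}, Mem' A Γ → Env X Γ → X A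
  | _, _, .here, ρ => ρ.1
  | _, _, .there m, ρ => lookupEnv m ρ.2

/-- A model of the simply typed lambda calculus: a family of carriers `X A`
(elements of `X (A.arr B)` act as functions via `ap`, elements of `X (A.prod B)`
have components via `fst`/`snd`), closed under interpretation of all typed terms,
with the interpretation satisfying the standard recursion equations. -/
structure STLCModel where
  X : Sty → Type
  ap : ∀ {A B}, X (.arr A B) → X A → X B
  fst : ∀ {A B}, X (.prod A B) → X A
  snd : ∀ {A B}, X (.prod A B) → X B
  eval : ∀ {Γ A}, Term Γ A → Env X Γ → X A
  eval_var : ∀ {Γ A} (m : Mem' A Γ) (ρ : Env X Γ), eval (.var m) ρ = lookupEnv m ρ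
  eval_app : ∀ {Γ A B} (s : Term Γ (.arr A B)) (t : Term Γ A) (ρ : Env X Γ),
    eval (.app s t) ρ = ap (eval s ρ) (eval t ρ)
  eval_lam : ∀ {Γ A B} (b : Term (A :: Γ) B) (ρ : Env X Γ) (a : X A),
    ap (eval (.lam b) ρ) a = eval b (a, ρ)
  eval_pair_fst : ∀ {Γ A B} (s : Term Γ A) (t : Term Γ B) (ρ : Env X Γ),
    fst (eval (.pair s t) ρ) = eval s ρ
  eval_pair_snd : ∀ {Γ A B} (s : Term Γ A) (t : Term Γ B) (ρ : Env X Γ),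
    snd (eval (.pair s t) ρ) = eval t ρ
  eval_p1 : ∀ {Γ A B} (p : Term Γ (.prod A B)) (ρ : Env X Γ),
    eval (.p1 p) ρ = fst (eval p ρ)
  eval_p2 : ∀ {Γ A B} (p : Term Γ (.prod A B)) (ρ : Env X Γ),
    eval (.p2 p) ρ = snd (eval p ρ)

/-- A family of relations is logical if it satisfies the standard conditions at
function and product types. -/
def IsLogical (M : STLCModel) (R : ∀ A, M.X A → M.X A → Prop) : Prop :=
  (∀ {A B : Sty} (f f' : M.X (.arr A B)),
      R (.arr A B) f f' ↔ ∀ a a', R A a a' → R B (M.ap f a) (M.ap f' a')) ∧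
  (∀ {A B : Sty} (p p' : M.X (.prod A B)),
      R (.prod A B) p p' ↔ R A (M.fst p) (M.fst p') ∧ R B (M.snd p) (M.snd p'))

/-- Pointwise relatedness of two environments. -/
def REnv (M : STLCModel) (R : ∀ A, M.X A → M.X A → Prop) :
    ∀ {Γ : List Sty}, Env M.X Γ → Env M.X Γ → Prop
  | [], _, _ => True
  | _ :: _, ρ, ρ' => R _ ρ.1 ρ'.1 ∧ REnv M R ρ.2 ρ'.2

theorem fundamental (M : STLCModel) (R : ∀ A, M.X A → M.X A → Prop)
    (hR : IsLogical M R) :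
    ∀ {Γ : List Sty} {A : Sty} (t : Term Γ A) (ρ ρ' : Env M.X Γ),
      REnv M R ρ ρ' → R A (M.eval t ρ) (M.eval t ρ') := by
  intro Γ A t
  induction t with
  | var m =>
    intro ρ ρ' h
    rw [M.eval_var, M.eval_var]
    induction m with
    | here => exact h.1
    | there m ih => exact ih ρ.2 ρ'.2 h.2
  | lam b ih =>
    intro ρ ρ' h
    rw [hR.1]
    intro a a' ha
    rw [M.eval_lam, M.eval_lam]
    exact ih _ _ ⟨ha, h⟩
  | app s t ihs iht =>
    intro ρ ρ' h
    rw [M.eval_app, M.eval_app]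
    exact (hR.1 _ _).mp (ihs ρ ρ' h) _ _ (iht ρ ρ' h)
  | pair s t ihs iht =>
    intro ρ ρ' h
    rw [hR.2]
    rw [M.eval_pair_fst, M.eval_pair_fst, M.eval_pair_snd, M.eval_pair_snd]
    exact ⟨ihs ρ ρ' h, iht ρ ρ' h⟩
  | p1 p ih =>
    intro ρ ρ' h
    rw [M.eval_p1, M.eval_p1]
    exact ((hR.2 _ _).mp (ih ρ ρ' h)).1
  | p2 p ih =>
    intro ρ ρ' h
    rw [M.eval_p2, M.eval_p2]
    exact ((hR.2 _ _).mp (ih ρ ρ' h)).2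

/-- If the base relation is reflexive, then its logical extension relates every
definable element to itself: the interpretation of any closed term, and more
generally of any term under an environment of self-related values, is
self-related. -/
theorem logical_extension_reflexive_on_definables (M : STLCModel)
    (R : ∀ A, M.X A → M.X A → Prop) (hR : IsLogical M R)
    (hrefl : ∀ x : M.X .o, R .o x x) :
    (∀ {A : Sty} (t : Term [] A) (ρ : Env M.X []), R A (M.eval t ρ) (M.eval t ρ)) ∧
    (∀ {Γ : List Sty} {A : Sty} (t : Term Γ A) (ρ : Env M.X Γ),
        REnv M R ρ ρ → R A (M.eval t ρ) (M.eval t ρ)) := by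
  exact ⟨fun t ρ => fundamental M R hR t ρ ρ trivial,
    fun t ρ h => fundamental M R hR t ρ ρ h⟩
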